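/- Let M be as above (smallest subset of ℝ³ containing (±1,1,1) invariant under a_t, b_t for t ∈ [0,1]). Then (0,0,0) lies in the closure of M. -/

import Mathlib

noncomputable def a3 (t : ℝ) (p : ℝ × ℝ × ℝ) : ℝ × ℝ × ℝ :=
  ((1 - t) * p.1 - t, (1 - t)^2 * p.2.1 - 3 * t * (1 - t) * p.1 + t * (2 * t - 1),
    (1 - t) * p.2.2 + t)

noncomputable def b3 (t : ℝ) (p : ℝ × ℝ × ℝ) : ℝ × ℝ × ℝ :=
  ((1 - t) * p.1 + t, (1 - t) * p.2.1 + t,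
    (1 - t)^2 * p.2.2 + 3 * t * (1 - t) * p.1 + t * (2 * t - 1))

/-- The smallest subset of ℝ³ containing (±1,1,1) invariant under all `a3 t`, `b3 t`. -/
noncomputable def M3 : Set (ℝ × ℝ × ℝ) :=
  ⋂₀ {S : Set (ℝ × ℝ × ℝ) | ((-1 : ℝ), (1 : ℝ), (1 : ℝ)) ∈ S ∧
    ((1 : ℝ), (1 : ℝ), (1 : ℝ)) ∈ S ∧
    ∀ t : ℝ, 0 ≤ t → t ≤ 1 → ∀ p ∈ S, a3 t p ∈ S ∧ b3 t p ∈ S}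

lemma one_mem_M3 : ((1 : ℝ), (1 : ℝ), (1 : ℝ)) ∈ M3 :=
  fun _ hS => hS.2.1

lemma a3_mem_M3 {t : ℝ} (h0 : 0 ≤ t) (h1 : t ≤ 1) {p : ℝ × ℝ × ℝ} (hp : p ∈ M3) :
    a3 t p ∈ M3 :=
  fun S hS => (hS.2.2 t h0 h1 p (hp S hS)).1

lemma b3_mem_M3 {t : ℝ} (h0 : 0 ≤ t) (h1 : t ≤ 1) {p : ℝ × ℝ × ℝ} (hp : p ∈ M3) :
    b3 t p ∈ M3 :=
  fun S hS => (hS.2.2 t h0 h1 p (hp S hS)).2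

set_option maxHeartbeats 2000000 in
theorem zero_mem_closure_M3 : ((0 : ℝ), (0 : ℝ), (0 : ℝ)) ∈ closure M3 := by
  rw [Metric.mem_closure_iff]
  intro ε hε
  set t : ℝ := min (ε / 8) (1 / 2) with ht_def
  have ht0 : 0 < t := lt_min (by linarith) (by norm_num)
  have ht2 : t ≤ 1 / 2 := min_le_right _ _
  have htε : t ≤ ε / 8 := min_le_left _ _
  have ht1 : t ≤ 1 := by linarith
  have hd1pos : (0 : ℝ) < 2 - t := by linarith
  have hd2pos : (0 : ℝ) < 3 - 3 * t + t ^ 2 := by nlinarith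
  -- the fixed point q of F = a3 t ∘ b3 t
  set q1 : ℝ := -t / (2 - t) with hq1_def
  set q2 : ℝ := t * (-t ^ 2 + 5 * t - 3) / ((2 - t) * (3 - 3 * t + t ^ 2)) with hq2_def
  set q3 : ℝ := t * (3 - t - t ^ 2) / ((2 - t) * (3 - 3 * t + t ^ 2)) with hq3_def
  set F : ℝ × ℝ × ℝ → ℝ × ℝ × ℝ := fun p => a3 t (b3 t p) with hF_def
  -- difference identities (encode that q is a fixed point of the affine map F)
  have hd1 : ∀ p : ℝ × ℝ × ℝ, (F p).1 - q1 = (1 - t) ^ 2 * (p.1 - q1) := by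
    intro p
    simp only [hF_def, a3, b3, hq1_def]
    field_simp
    ring
  have hd2 : ∀ p : ℝ × ℝ × ℝ,
      (F p).2.1 - q2 = (1 - t) ^ 3 * (p.2.1 - q2) - 3 * t * (1 - t) ^ 2 * (p.1 - q1) := by
    intro p
    simp only [hF_def, a3, b3, hq1_def, hq2_def]
    field_simp [hd1pos.ne', hd2pos.ne', show ((1 - t) * 3 + t ^ 2 : ℝ) ≠ 0 by nlinarith]
    ring
  have hd3 : ∀ p : ℝ × ℝ × ℝ,
      (F p).2.2 - q3 = (1 - t) ^ 3 * (p.2.2 - q3) + 3 * t * (1 - t) ^ 2 * (p.1 - q1) := by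
    intro p
    simp only [hF_def, a3, b3, hq1_def, hq3_def]
    field_simp [hd1pos.ne', hd2pos.ne', show ((1 - t) * 3 + t ^ 2 : ℝ) ≠ 0 by nlinarith]
    ring
  -- bounds on q
  have hq1b : |q1| ≤ 2 * t := by
    rw [abs_le]
    constructor
    · rw [hq1_def, le_div_iff₀ hd1pos]; nlinarith
    · rw [hq1_def, div_le_iff₀ hd1pos]; nlinarith
  have hDpos : (0 : ℝ) < (2 - t) * (3 - 3 * t + t ^ 2) := mul_pos hd1pos hd2pos
  have hq2b : |q2| ≤ 2 * t := by
    rw [abs_le]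
    constructor
    · rw [hq2_def, le_div_iff₀ hDpos]
      nlinarith [mul_nonneg ht0.le ht0.le, mul_nonneg (mul_nonneg ht0.le ht0.le) ht0.le,
        mul_nonneg (mul_nonneg (mul_nonneg ht0.le ht0.le) ht0.le) ht0.le]
    · rw [hq2_def, div_le_iff₀ hDpos]; nlinarith
  have hq3b : |q3| ≤ 2 * t := by
    rw [abs_le]
    constructor
    · rw [hq3_def, le_div_iff₀ hDpos]; nlinarith
    · rw [hq3_def, div_le_iff₀ hDpos]
      nlinarith [mul_nonneg ht0.le ht0.le, mul_nonneg (mul_nonneg ht0.le ht0.le) ht0.le,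
        mul_nonneg (mul_nonneg (mul_nonneg ht0.le ht0.le) ht0.le) ht0.le]
  -- the contraction constant
  set k : ℝ := (1 - t) ^ 2 * (1 + 2 * t) with hk_def
  have hk0 : 0 ≤ k := by nlinarith
  have hk1 : k < 1 := by nlinarith
  have hksum : (1 - t) ^ 3 + 3 * t * (1 - t) ^ 2 = k := by rw [hk_def]; ring
  have hα2k : (1 - t) ^ 2 ≤ k := by nlinarith
  -- iterates
  set P : ℕ → ℝ × ℝ × ℝ := fun n => F^[n] ((1 : ℝ), (1 : ℝ), (1 : ℝ)) with hP_def
  have hPmem : ∀ n, P n ∈ M3 := by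
    intro n
    induction n with
    | zero => exact one_mem_M3
    | succ n ih =>
      have : P (n + 1) = F (P n) := Function.iterate_succ_apply' F n _
      rw [this]
      exact a3_mem_M3 ht0.le ht1 (b3_mem_M3 ht0.le ht1 ih)
  have hα3nn : (0 : ℝ) ≤ (1 - t) ^ 3 := by nlinarith
  have hα2nn : (0 : ℝ) ≤ (1 - t) ^ 2 := by positivity
  have h3tnn : (0 : ℝ) ≤ 3 * t * (1 - t) ^ 2 := by nlinarith
  -- simultaneous bound by induction
  have hbound : ∀ n, |(P n).1 - q1| ≤ 2 * k ^ n ∧ |(P n).2.1 - q2| ≤ 2 * k ^ n ∧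
      |(P n).2.2 - q3| ≤ 2 * k ^ n := by
    intro n
    induction n with
    | zero =>
      simp only [hP_def, Function.iterate_zero, id_eq, pow_zero, mul_one]
      have h1 : |(1 : ℝ) - q1| ≤ 1 + |q1| := by
        calc |(1 : ℝ) - q1| ≤ |(1 : ℝ)| + |q1| := abs_sub _ _
        _ = 1 + |q1| := by norm_num
      have h2 : |(1 : ℝ) - q2| ≤ 1 + |q2| := by
        calc |(1 : ℝ) - q2| ≤ |(1 : ℝ)| + |q2| := abs_sub _ _
        _ = 1 + |q2| := by norm_num
      have h3 : |(1 : ℝ) - q3| ≤ 1 + |q3| := by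
        calc |(1 : ℝ) - q3| ≤ |(1 : ℝ)| + |q3| := abs_sub _ _
        _ = 1 + |q3| := by norm_num
      refine ⟨by linarith, by linarith, by linarith⟩
    | succ n ih =>
      obtain ⟨ih1, ih2, ih3⟩ := ih
      have hstep : P (n + 1) = F (P n) := Function.iterate_succ_apply' F n _
      have hkn : (0 : ℝ) ≤ k ^ n := pow_nonneg hk0 n
      refine ⟨?_, ?_, ?_⟩
      · rw [hstep, hd1, abs_mul, abs_of_nonneg hα2nn]
        calc (1 - t) ^ 2 * |(P n).1 - q1| ≤ k * (2 * k ^ n) := by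
              apply mul_le_mul hα2k ih1 (abs_nonneg _) hk0
        _ = 2 * k ^ (n + 1) := by ring
      · rw [hstep, hd2]
        calc |(1 - t) ^ 3 * ((P n).2.1 - q2) - 3 * t * (1 - t) ^ 2 * ((P n).1 - q1)|
            ≤ |(1 - t) ^ 3 * ((P n).2.1 - q2)| + |3 * t * (1 - t) ^ 2 * ((P n).1 - q1)| :=
              abs_sub _ _
        _ = (1 - t) ^ 3 * |(P n).2.1 - q2| + 3 * t * (1 - t) ^ 2 * |(P n).1 - q1| := by
              rw [abs_mul, abs_mul, abs_of_nonneg hα3nn, abs_of_nonneg h3tnn]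
        _ ≤ (1 - t) ^ 3 * (2 * k ^ n) + 3 * t * (1 - t) ^ 2 * (2 * k ^ n) := by
              apply add_le_add
              · exact mul_le_mul_of_nonneg_left ih2 hα3nn
              · exact mul_le_mul_of_nonneg_left ih1 h3tnn
        _ = ((1 - t) ^ 3 + 3 * t * (1 - t) ^ 2) * (2 * k ^ n) := by ring
        _ = 2 * k ^ (n + 1) := by rw [hksum]; ring
      · rw [hstep, hd3]
        calc |(1 - t) ^ 3 * ((P n).2.2 - q3) + 3 * t * (1 - t) ^ 2 * ((P n).1 - q1)|
            ≤ |(1 - t) ^ 3 * ((P n).2.2 - q3)| + |3 * t * (1 - t) ^ 2 * ((P n).1 - q1)| :=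
              abs_add_le _ _
        _ = (1 - t) ^ 3 * |(P n).2.2 - q3| + 3 * t * (1 - t) ^ 2 * |(P n).1 - q1| := by
              rw [abs_mul, abs_mul, abs_of_nonneg hα3nn, abs_of_nonneg h3tnn]
        _ ≤ (1 - t) ^ 3 * (2 * k ^ n) + 3 * t * (1 - t) ^ 2 * (2 * k ^ n) := by
              apply add_le_add
              · exact mul_le_mul_of_nonneg_left ih3 hα3nn
              · exact mul_le_mul_of_nonneg_left ih1 h3tnn
        _ = ((1 - t) ^ 3 + 3 * t * (1 - t) ^ 2) * (2 * k ^ n) := by ring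
        _ = 2 * k ^ (n + 1) := by rw [hksum]; ring
  -- choose n large
  have htend : Filter.Tendsto (fun n : ℕ => 2 * k ^ n) Filter.atTop (nhds 0) := by
    have := tendsto_pow_atTop_nhds_zero_of_lt_one hk0 hk1
    simpa using this.const_mul 2
  have hev : ∀ᶠ n in Filter.atTop, 2 * k ^ n < ε / 4 := by
    have : (0 : ℝ) < ε / 4 := by linarith
    exact (htend.eventually (gt_mem_nhds this))
  obtain ⟨n, hn⟩ := hev.exists
  refine ⟨P n, hPmem n, ?_⟩
  obtain ⟨hb1, hb2, hb3⟩ := hbound n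
  have h2t : 2 * t ≤ ε / 4 := by linarith
  have e1 : |(P n).1| < ε / 2 := by
    calc |(P n).1| ≤ |(P n).1 - q1| + |q1| := by
          have := abs_add_le ((P n).1 - q1) q1; simpa using this
    _ < ε / 4 + ε / 4 := by
          apply add_lt_add_of_lt_of_le (lt_of_le_of_lt hb1 hn) (le_trans hq1b h2t)
    _ = ε / 2 := by ring
  have e2 : |(P n).2.1| < ε / 2 := by
    calc |(P n).2.1| ≤ |(P n).2.1 - q2| + |q2| := by
          have := abs_add_le ((P n).2.1 - q2) q2; simpa using this
    _ < ε / 4 + ε / 4 := by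
          apply add_lt_add_of_lt_of_le (lt_of_le_of_lt hb2 hn) (le_trans hq2b h2t)
    _ = ε / 2 := by ring
  have e3 : |(P n).2.2| < ε / 2 := by
    calc |(P n).2.2| ≤ |(P n).2.2 - q3| + |q3| := by
          have := abs_add_le ((P n).2.2 - q3) q3; simpa using this
    _ < ε / 4 + ε / 4 := by
          apply add_lt_add_of_lt_of_le (lt_of_le_of_lt hb3 hn) (le_trans hq3b h2t)
    _ = ε / 2 := by ring
  have hdist : dist ((0 : ℝ), (0 : ℝ), (0 : ℝ)) (P n) =
      max |(P n).1| (max |(P n).2.1| |(P n).2.2|) := by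
    simp [Prod.dist_eq, Real.dist_eq, abs_sub_comm]
  rw [hdist]
  have : max |(P n).1| (max |(P n).2.1| |(P n).2.2|) < ε / 2 := by
    apply max_lt e1 (max_lt e2 e3)
  linarith
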